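/- The protocol P^intent is an intersection protocol (satisfies Validity, Safety, and Liveness) and is lexicographically optimal with respect to γ_intent(F) for each adversary model F ∈ {CR, SO}. -/

import Mathlib

open scoped Classical

noncomputable section

namespace Inter

/-- Actions available to each agent. -/
inductive Act where
  | go
  | noop
deriving DecidableEq

/-- A move through the intersection: an incoming lane paired with an outgoing lane. -/
abbrev Move (kin kout : ℕ) := Fin kin × Fin kout

/-- An adversary: a conflict-free arrival schedule, a transmission environment and
transmitter/receiver failure functions. -/
structure Adversary (kin kout : ℕ) where
  arrive : ℕ → ℕ × Fin kin × Fin kout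
  conflictFree : ∀ i j : ℕ, i ≠ j → (arrive i).1 = (arrive j).1 →
    (arrive i).2.1 ≠ (arrive j).2.1
  T : Set ((Fin kin × ℕ) × (Fin kin × ℕ))
  T_front : ∀ l l' : Fin kin, ((l, 0), (l', 0)) ∈ T
  Ft : ℕ → ℕ → Bool
  Fr : ℕ → ℕ → Bool

/-- The lane component of a sensor reading: an incoming lane, ⊥ (not yet arrived),
or ⊤ (departed). -/
inductive LaneStatus (kin : ℕ) where
  | inLane (l : Fin kin)
  | notArrived
  | finished

/-- The minimal sensor reading: front, lane and intent. -/
structure Reading (kin kout : ℕ) where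
  front : Prop
  lane : LaneStatus kin
  intent : Fin kout

/-- Environment states record the adversary, the time, a queue for each incoming lane
and the set of departed agents. -/
structure EnvState (kin kout : ℕ) where
  adv : Adversary kin kout
  time : ℕ
  queue : Fin kin → List ℕ
  done : Set ℕ

/-- Local states: a memory state together with a sensor reading
(the minimal reading plus possibly extra sensor information). -/
abbrev LState (kin kout : ℕ) (Mem Extra : Type*) := Mem × Reading kin kout × Extra

/-- Global states: an environment state and local states for all agents. -/
abbrev GState (kin kout : ℕ) (Mem Extra : Type*) :=
  EnvState kin kout × (ℕ → LState kin kout Mem Extra)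

/-- A run. -/
abbrev Run (kin kout : ℕ) (Mem Extra : Type*) := ℕ → GState kin kout Mem Extra

/-- An action protocol maps each agent's local state to an action. -/
abbrev Prot (kin kout : ℕ) (Mem Extra : Type*) := ℕ → LState kin kout Mem Extra → Act

variable {kin kout : ℕ} {Mem Extra Msg : Type*}

/-- Agent `i` is at the front of some queue. -/
def isFront (e : EnvState kin kout) (i : ℕ) : Prop :=
  ∃ l : Fin kin, (e.queue l).head? = some i

/-- The (lane, position) of agent `i`, if it is in some queue. -/
def posAt (e : EnvState kin kout) (i : ℕ) : Option (Fin kin × ℕ) :=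
  if h : ∃ l : Fin kin, i ∈ e.queue l then some (h.choose, (e.queue h.choose).idxOf i)
  else none

/-- The intended departure lane of agent `i`, as given by the arrival schedule. -/
def intentOf (e : EnvState kin kout) (i : ℕ) : Fin kout := (e.adv.arrive i).2.2

/-- The move `(lane_i, intent_i)` of agent `i`, if it is in some queue. -/
def moveAt (e : EnvState kin kout) (i : ℕ) : Option (Move kin kout) :=
  (posAt e i).map (fun p => (p.1, intentOf e i))

/-- The minimal sensor reading of agent `i` in environment state `e`. -/
def minimalReading (e : EnvState kin kout) (i : ℕ) : Reading kin kout where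
  front := isFront e i
  lane :=
    if h : ∃ l : Fin kin, i ∈ e.queue l then LaneStatus.inLane h.choose
    else if i ∈ e.done then LaneStatus.finished else LaneStatus.notArrived
  intent := intentOf e i

/-- An information-exchange protocol: initial memories, extra sensor information,
a message function and a memory-update function. -/
structure IEP (kin kout : ℕ) (Mem Extra Msg : Type*) where
  initMem : ℕ → Mem
  extra : EnvState kin kout → ℕ → Extra
  msg : ℕ → LState kin kout Mem Extra → Act → Reading kin kout × Extra → Option Msg
  upd : ℕ → LState kin kout Mem Extra → Act → Set Msg → Mem

/-- One round of the system: agents act, queues are updated (dequeues for agents that go,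
enqueues for new arrivals), new sensor readings are taken, messages are broadcast and
received subject to the transmission environment and the failure functions, and memories
are updated. -/
def step (E : IEP kin kout Mem Extra Msg) (P : Prot kin kout Mem Extra)
    (g : GState kin kout Mem Extra) : GState kin kout Mem Extra :=
  let e := g.1
  let act : ℕ → Act := fun i => P i (g.2 i)
  let q' : Fin kin → List ℕ := fun l =>
    let q1 := match (e.queue l).head? with
      | some i => if act i = Act.go then (e.queue l).tail else e.queue l
      | none => e.queue l
    if h : ∃ i l', e.adv.arrive i = (e.time + 1, l, l') then q1 ++ [h.choose] else q1
  let done' : Set ℕ := e.done ∪ {i | isFront e i ∧ act i = Act.go}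
  let e' : EnvState kin kout := ⟨e.adv, e.time + 1, q', done'⟩
  let sens : ℕ → Reading kin kout × Extra := fun i => (minimalReading e' i, E.extra e' i)
  let rcv : ℕ → Set Msg := fun i =>
    if e.adv.Fr e.time i = true ∧ (posAt e' i).isSome = true then
      {m | ∃ j pj pi, E.msg j (g.2 j) (act j) (sens j) = some m ∧
            e.adv.Ft e.time j = true ∧
            posAt e' j = some pj ∧ posAt e' i = some pi ∧ (pj, pi) ∈ e.adv.T}
    else ∅
  (e', fun i => (E.upd i (g.2 i) (act i) (rcv i), sens i))

/-- An intersection context: an information-exchange protocol together with an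
adversary model. -/
structure Ctx (kin kout : ℕ) (Mem Extra Msg : Type*) where
  iep : IEP kin kout Mem Extra Msg
  adv : Set (Adversary kin kout)

/-- Initial global states: time 0, empty queues, no departed agents, an adversary
from the adversary model, and initial local states. -/
def Init (C : Ctx kin kout Mem Extra Msg) (g : GState kin kout Mem Extra) : Prop :=
  g.1.adv ∈ C.adv ∧ g.1.time = 0 ∧ (∀ l, g.1.queue l = []) ∧ g.1.done = ∅ ∧
  ∀ i, g.2 i = (C.iep.initMem i, minimalReading g.1 i, C.iep.extra g.1 i)

/-- The interpreted system `I_{γ,P}`: the set of runs of protocol `P` in context `γ`. -/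
def Runs (C : Ctx kin kout Mem Extra Msg) (P : Prot kin kout Mem Extra) :
    Set (Run kin kout Mem Extra) :=
  {r | Init C (r 0) ∧ ∀ m, r (m + 1) = step C.iep P (r m)}

/-- `front_i` holds at the point `(r,m)`. -/
def frontAt (r : Run kin kout Mem Extra) (m i : ℕ) : Prop := isFront (r m).1 i

/-- `going_i` abbreviates `front_i ∧ ◯¬front_i`. -/
def goingAt (r : Run kin kout Mem Extra) (m i : ℕ) : Prop :=
  frontAt r m i ∧ ¬ frontAt r (m + 1) i

/-- `GO(r,m)`: the set of agents that go through the intersection in round `m+1`. -/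
def GOs (r : Run kin kout Mem Extra) (m : ℕ) : Set ℕ := {i | goingAt r m i}

/-- Validity: an agent goes through the intersection only from the front of its queue. -/
def ValidityP (C : Ctx kin kout Mem Extra Msg) (P : Prot kin kout Mem Extra) : Prop :=
  ∀ r ∈ Runs C P, ∀ m i, goingAt r m i → frontAt r m i

/-- Safety: agents that go simultaneously have compatible moves. -/
def SafetyP (O : Move kin kout → Move kin kout → Prop)
    (C : Ctx kin kout Mem Extra Msg) (P : Prot kin kout Mem Extra) : Prop :=
  ∀ r ∈ Runs C P, ∀ m i j, i ≠ j → goingAt r m i → goingAt r m j →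
    ∀ mi mj, moveAt (r m).1 i = some mi → moveAt (r m).1 j = some mj → O mi mj

/-- Liveness: every agent at the front of a queue eventually goes. -/
def LivenessP (C : Ctx kin kout Mem Extra Msg) (P : Prot kin kout Mem Extra) : Prop :=
  ∀ r ∈ Runs C P, ∀ m i, frontAt r m i → ∃ m' ≥ m, goingAt r m' i

/-- An intersection protocol: an action protocol satisfying Validity, Safety and Liveness. -/
def IsIntersectionProtocol (O : Move kin kout → Move kin kout → Prop)
    (C : Ctx kin kout Mem Extra Msg) (P : Prot kin kout Mem Extra) : Prop :=
  ValidityP C P ∧ SafetyP O C P ∧ LivenessP C P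

/-- `safe-to-go_i` at `(r,m)`: `i` is at the front of its queue (position 0) and the moves
of the agents in `GO(r,m) ∪ {i}` are pairwise compatible. -/
def safeToGo (O : Move kin kout → Move kin kout → Prop)
    (r : Run kin kout Mem Extra) (m i : ℕ) : Prop :=
  (∃ p, posAt (r m).1 i = some p ∧ p.2 = 0) ∧
  ∀ j ∈ GOs r m ∪ {i}, ∀ k ∈ GOs r m ∪ {i}, j ≠ k →
    ∀ mj mk, moveAt (r m).1 j = some mj → moveAt (r m).1 k = some mk → O mj mk

/-- `P` has unnecessary waiting with respect to `γ`. -/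
def UnnecessaryWaiting (O : Move kin kout → Move kin kout → Prop)
    (C : Ctx kin kout Mem Extra Msg) (P : Prot kin kout Mem Extra) : Prop :=
  ∃ r ∈ Runs C P, ∃ m i, safeToGo O r m i ∧ i ∉ GOs r m

/-- The time at which agent `i` goes through the intersection in run `r` (∞ if never). -/
def gotime (r : Run kin kout Mem Extra) (i : ℕ) : ℕ∞ :=
  sInf {n : ℕ∞ | ∃ m : ℕ, goingAt r m i ∧ n = (m : ℕ∞)}

/-- `P` dominates `P'`: on all corresponding runs, every agent goes at least as early. -/
def Dominates (C : Ctx kin kout Mem Extra Msg) (P P' : Prot kin kout Mem Extra) : Prop :=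
  ∀ r ∈ Runs C P, ∀ r' ∈ Runs C P', r 0 = r' 0 → ∀ i, gotime r i ≤ gotime r' i

def StrictDominates (C : Ctx kin kout Mem Extra Msg) (P P' : Prot kin kout Mem Extra) : Prop :=
  Dominates C P P' ∧ ¬ Dominates C P' P

/-- `P` is optimal: no intersection protocol strictly dominates it. -/
def Optimal (O : Move kin kout → Move kin kout → Prop)
    (C : Ctx kin kout Mem Extra Msg) (P : Prot kin kout Mem Extra) : Prop :=
  ¬ ∃ P' : Prot kin kout Mem Extra,
      IsIntersectionProtocol O C P' ∧ StrictDominates C P' P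

/-- `P` lexicographically dominates `P'`. -/
def LexDominates (C : Ctx kin kout Mem Extra Msg) (P P' : Prot kin kout Mem Extra) : Prop :=
  ∀ r ∈ Runs C P, ∀ r' ∈ Runs C P', r 0 = r' 0 →
    (∀ m, GOs r m = GOs r' m) ∨
    ∃ m, (∀ k < m, GOs r k = GOs r' k) ∧ GOs r m ≠ GOs r' m ∧ GOs r' m ⊂ GOs r m

def StrictLexDominates (C : Ctx kin kout Mem Extra Msg) (P P' : Prot kin kout Mem Extra) :
    Prop :=
  LexDominates C P P' ∧ ¬ LexDominates C P' P

/-- `P` is lexicographically optimal: no intersection protocol strictly lexicographically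
dominates it. -/
def LexOptimal (O : Move kin kout → Move kin kout → Prop)
    (C : Ctx kin kout Mem Extra Msg) (P : Prot kin kout Mem Extra) : Prop :=
  ¬ ∃ P' : Prot kin kout Mem Extra,
      IsIntersectionProtocol O C P' ∧ StrictLexDominates C P' P

/-- Knowledge: `K_i φ` holds at `(r,m)` iff `φ` holds at all points of the system where
agent `i` has the same local state. -/
def Kn (S : Set (Run kin kout Mem Extra)) (i : ℕ)
    (φ : Run kin kout Mem Extra → ℕ → Prop) (r : Run kin kout Mem Extra) (m : ℕ) : Prop :=
  ∀ r' ∈ S, ∀ m', (r' m').2 i = (r m).2 i → φ r' m'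

/-- The adversary model has no failures. -/
def NoFailures (C : Ctx kin kout Mem Extra Msg) : Prop :=
  ∀ α ∈ C.adv, ∀ k i, α.Ft k i = true ∧ α.Fr k i = true

/-- Full information exchange: every agent broadcasts (an injective encoding of) its
entire local state in every round, and records every broadcast it receives. -/
def FullInfo (C : Ctx kin kout Mem Extra Msg) : Prop :=
  (∃ enc : LState kin kout Mem Extra → Msg, Function.Injective enc ∧
      ∀ i s a o, C.iep.msg i s a o = some (enc s)) ∧
  (∀ i s a, Function.Injective fun B : Set Msg => C.iep.upd i s a B)

/-- A sufficiently rich context: every agent that will be at the front of some lane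
broadcasts a message encoding its lane and intent, tagged as coming from the front;
no other message is tagged as a front message; and each agent records the
(lane, intent) pair of each front agent it hears from. -/
def SufficientlyRich (C : Ctx kin kout Mem Extra Msg) : Prop :=
  ∃ dec : Msg → Option (Move kin kout),
    (∀ i s a (o : Reading kin kout × Extra) (l : Fin kin),
        o.1.front → o.1.lane = LaneStatus.inLane l →
        ∃ msg, C.iep.msg i s a o = some msg ∧ dec msg = some (l, o.1.intent)) ∧
    (∀ i s a (o : Reading kin kout × Extra), ¬ o.1.front →
        ∀ msg, C.iep.msg i s a o = some msg → dec msg = none) ∧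
    (∃ rec : Mem → Set (Move kin kout),
        ∀ i s a B, rec (C.iep.upd i s a B) = {mv | ∃ msg ∈ B, dec msg = some mv})

/-- The set of agents at the front of a queue. -/
def FrontSet (e : EnvState kin kout) : Set ℕ := {i | isFront e i}

/-- `P` depends only on the agents at the front of their queues. -/
def DependsOnlyOnFront (C : Ctx kin kout Mem Extra Msg) (P : Prot kin kout Mem Extra) :
    Prop :=
  ∀ r ∈ Runs C P, ∀ r' ∈ Runs C P, ∀ m m' i,
    FrontSet (r m).1 = FrontSet (r' m').1 → P i ((r m).2 i) = P i ((r' m').2 i)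

/-- The choices of an adversary in a single round: arrivals, the transmission
environment and the failure values. -/
structure Choice (kin kout : ℕ) where
  arrivals : Set (ℕ × Fin kin × Fin kout)
  T : Set ((Fin kin × ℕ) × (Fin kin × ℕ))
  Ft : ℕ → Bool
  Fr : ℕ → Bool

/-- The choices of adversary `α` in round `m+1`. -/
def choiceAt (α : Adversary kin kout) (m : ℕ) : Choice kin kout where
  arrivals := {p | α.arrive p.1 = (m + 1, p.2.1, p.2.2)}
  T := α.T
  Ft := fun i => α.Ft m i
  Fr := fun i => α.Fr m i

/-- The adversary history `H(α,m) = ⟨α_0, …, α_{m-1}⟩`. -/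
def hist (α : Adversary kin kout) (m : ℕ) : List (Choice kin kout) :=
  (List.range m).map (choiceAt α)

/-- The adversary history of run `r` up to time `m`. -/
def histOf (r : Run kin kout Mem Extra) (m : ℕ) : List (Choice kin kout) :=
  hist (r 0).1.adv m

/-- An intersection policy: a map from adversary histories to sets of permitted moves. -/
abbrev Policy (kin kout : ℕ) := List (Choice kin kout) → Set (Move kin kout)

/-- The set `H_γ` of adversary histories of the context. -/
def Hists (C : Ctx kin kout Mem Extra Msg) : Set (List (Choice kin kout)) :=
  {h | ∃ α ∈ C.adv, ∃ m, h = hist α m}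

/-- A feasible infinite sequence of histories: one arising from a single adversary. -/
def Feasible (F : Set (Adversary kin kout)) (h : ℕ → List (Choice kin kout)) : Prop :=
  ∃ α ∈ F, ∀ m, h m = hist α m

/-- Conflict-freedom of an intersection policy. -/
def ConflictFree (O : Move kin kout → Move kin kout → Prop)
    (C : Ctx kin kout Mem Extra Msg) (σ : Policy kin kout) : Prop :=
  ∀ h ∈ Hists C, ∀ mv ∈ σ h, ∀ mv' ∈ σ h, mv ≠ mv' → O mv mv'

/-- Fairness of an intersection policy. -/
def FairPolicy (C : Ctx kin kout Mem Extra Msg) (σ : Policy kin kout) : Prop :=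
  ∀ h : ℕ → List (Choice kin kout), Feasible C.adv h →
    ∀ mv : Move kin kout, ∀ m, ∃ m' ≥ m, mv ∈ σ (h m')

/-- A correct intersection policy: conflict-free and fair. -/
def CorrectPolicy (O : Move kin kout → Move kin kout → Prop)
    (C : Ctx kin kout Mem Extra Msg) (σ : Policy kin kout) : Prop :=
  ConflictFree O C σ ∧ FairPolicy C σ

/-- A synchronous context: the time is encoded in each agent's local state. -/
def Synchronous (C : Ctx kin kout Mem Extra Msg) : Prop :=
  ∃ clock : LState kin kout Mem Extra → ℕ,
    ∀ P : Prot kin kout Mem Extra, ∀ r ∈ Runs C P, ∀ m i, clock ((r m).2 i) = m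

/-- The knowledge condition of the knowledge-based program `P^σ`:
`front_i ∧ (lane_i, intent_i) ∈ σ`. -/
def phiSigma (σ : Policy kin kout) (i : ℕ) (r : Run kin kout Mem Extra) (m : ℕ) : Prop :=
  frontAt r m i ∧ ∃ mv, moveAt (r m).1 i = some mv ∧ mv ∈ σ (histOf r m)

/-- `P` implements the knowledge-based program `if K_i φ_i then go else noop` in `γ`. -/
def Implements (C : Ctx kin kout Mem Extra Msg) (P : Prot kin kout Mem Extra)
    (φ : ℕ → Run kin kout Mem Extra → ℕ → Prop) : Prop :=
  ∀ r ∈ Runs C P, ∀ m i, (P i ((r m).2 i) = Act.go ↔ Kn (Runs C P) i (φ i) r m)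

/-- Behavioral equivalence: the protocols take the same actions at all reachable states. -/
def BehEq (C : Ctx kin kout Mem Extra Msg) (P P' : Prot kin kout Mem Extra) : Prop :=
  (∀ r ∈ Runs C P, ∀ m i, P i ((r m).2 i) = P' i ((r m).2 i)) ∧
  (∀ r ∈ Runs C P', ∀ m i, P i ((r m).2 i) = P' i ((r m).2 i))

/-- `γ` is `σ`-aware. -/
def SigmaAware (C : Ctx kin kout Mem Extra Msg) (σ : Policy kin kout) : Prop :=
  ∀ P : Prot kin kout Mem Extra, ∀ r ∈ Runs C P, ∀ m i (l : Fin kin) (l' : Fin kout),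
    (l, l') ∈ σ (histOf r m) → i ∈ (r m).1.queue l →
    Kn (Runs C P) i (fun r' m' => (l, l') ∈ σ (histOf r' m')) r m

/-- `γ` is `next`-aware. -/
def NextAware (C : Ctx kin kout Mem Extra Msg)
    (next : List (Choice kin kout) → Fin kin) : Prop :=
  ∀ P : Prot kin kout Mem Extra, ∀ r ∈ Runs C P, ∀ m i (l : Fin kin),
    next (histOf r m) = l →
    Kn (Runs C P) i (fun r' m' => next (histOf r' m') = l) r m

/-- Cyclic distance from `a` to `b` (mod `kin`). -/
def distC (a b : Fin kin) : ℕ := (b.val + kin - a.val) % kin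

/-- `l` lies in the cyclic interval `[a, b)` of incoming lanes. -/
def inCyc (a b l : Fin kin) : Prop := distC a l < distC a b

/-- `mv` is compatible with every move in `S`. -/
def compatAll (O : Move kin kout → Move kin kout → Prop)
    (S : Set (Move kin kout)) (mv : Move kin kout) : Prop :=
  ∀ mv' ∈ S, O mv mv'

/-- The proposition `V_i` of the knowledge-based program `𝐏`. -/
def Vprop (O : Move kin kout → Move kin kout → Prop) (σ : Policy kin kout)
    (next : List (Choice kin kout) → Fin kin) (i : ℕ)
    (r : Run kin kout Mem Extra) (m : ℕ) : Prop :=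
  ∃ mv, moveAt (r m).1 i = some mv ∧ mv ∉ σ (histOf r m) ∧
    (∀ j mj, goingAt r m j → moveAt (r m).1 j = some mj →
        mj ∈ σ (histOf r m) → O mv mj) ∧
    (∀ j mj, j ≠ i → goingAt r m j → moveAt (r m).1 j = some mj →
        mj ∉ σ (histOf r m) → inCyc (next (histOf r m)) mv.1 mj.1 → O mv mj)

/-- The knowledge condition of the knowledge-based program `𝐏`:
`front_i ∧ ((lane_i, intent_i) ∈ σ ∨ V_i)`. -/
def phiP (O : Move kin kout → Move kin kout → Prop) (σ : Policy kin kout)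
    (next : List (Choice kin kout) → Fin kin) (i : ℕ)
    (r : Run kin kout Mem Extra) (m : ℕ) : Prop :=
  frontAt r m i ∧
    ((∃ mv, moveAt (r m).1 i = some mv ∧ mv ∈ σ (histOf r m)) ∨ Vprop O σ next i r m)

/-- Fairness of a `next` function. -/
def FairNext (C : Ctx kin kout Mem Extra Msg)
    (next : List (Choice kin kout) → Fin kin) : Prop :=
  ∀ h : ℕ → List (Choice kin kout), Feasible C.adv h →
    ∀ m (l : Fin kin), ∃ m' ≥ m, next (h m') = l

/-- Fairness of a pair `(σ, next)`. -/
def PairFair (O : Move kin kout → Move kin kout → Prop)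
    (C : Ctx kin kout Mem Extra Msg) (σ : Policy kin kout)
    (next : List (Choice kin kout) → Fin kin) : Prop :=
  ∀ h : ℕ → List (Choice kin kout), Feasible C.adv h →
    ∀ m (mv : Move kin kout), ∃ m' ≥ m,
      mv ∈ σ (h m') ∨ (next (h m') = mv.1 ∧ compatAll O (σ (h m')) mv)

/-- `next(h) = |h| mod |L_in|` at time `t`. -/
def nextL (hkin : 0 < kin) (t : ℕ) : Fin kin := ⟨t % kin, Nat.mod_lt _ hkin⟩

/-- The stages of the construction of the set `Pos_i`, starting from the lane `nxt` and
proceeding in cyclic order; `M` is the set of moves received from front agents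
(empty when there is no communication). -/
def posStage (hkin : 0 < kin) (O : Move kin kout → Move kin kout → Prop)
    (M : Set (Move kin kout)) (nxt : Fin kin) : ℕ → Set (Move kin kout)
  | 0 => ∅
  | t + 1 =>
    let S := posStage hkin O M nxt t
    let l : Fin kin := ⟨(nxt.val + t) % kin, Nat.mod_lt _ hkin⟩
    if ∃ l' : Fin kout, (l, l') ∈ M then
      S ∪ {mv | mv.1 = l ∧ mv ∈ M ∧ compatAll O S mv}
    else
      S ∪ {mv | mv.1 = l ∧ compatAll O S mv}

/-- The set `Pos_i` computed from the received moves `M`, the lane `nxt = next` and the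
agent's own lane `lanei`. -/
def PosSet (hkin : 0 < kin) (O : Move kin kout → Move kin kout → Prop)
    (M : Set (Move kin kout)) (nxt lanei : Fin kin) : Set (Move kin kout) :=
  posStage hkin O M nxt (distC nxt lanei)

/-- The stage `Pos_i^l` of the construction of `Pos_i`, for a lane `l` in the cyclic
interval `[nxt, lane_i)`. -/
def PosUpTo (hkin : 0 < kin) (O : Move kin kout → Move kin kout → Prop)
    (M : Set (Move kin kout)) (nxt l : Fin kin) : Set (Move kin kout) :=
  posStage hkin O M nxt (distC nxt l + 1)

/-- The adversary model with no failures. -/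
def NFadv (kin kout : ℕ) : Set (Adversary kin kout) :=
  {α | ∀ k i, α.Ft k i = true ∧ α.Fr k i = true}

/-- The adversary model with crash failures. -/
def CRadv (kin kout : ℕ) : Set (Adversary kin kout) :=
  {α | (∀ k i, α.Fr k i = true) ∧
    ∀ k i, α.Ft k i = false → ∀ k', k < k' → α.Ft k' i = false}

/-- The adversary model with sending omissions. -/
def SOadv (kin kout : ℕ) : Set (Adversary kin kout) :=
  {α | ∀ k i, α.Fr k i = true}

/-- The information-exchange protocol of `γ_∅`: a single memory state, no messages,
and sensor readings `⟨front_i, lane_i, intent_i, time_i⟩`. -/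
def E0 (kin kout : ℕ) : IEP kin kout Unit ℕ Empty where
  initMem _ := ()
  extra e _ := e.time
  msg _ _ _ _ := none
  upd _ _ _ _ := ()

/-- The context `γ_∅(F)`. -/
def gammaEmpty (kin kout : ℕ) (F : Set (Adversary kin kout)) : Ctx kin kout Unit ℕ Empty :=
  ⟨E0 kin kout, F⟩

/-- The protocol `P^∅`: go iff at the front and own move compatible with `Pos_i`. -/
def Pempty (hkin : 0 < kin) (O : Move kin kout → Move kin kout → Prop) :
    Prot kin kout Unit ℕ := fun _ s =>
  match s.2.1.lane with
  | LaneStatus.inLane l =>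
      if s.2.1.front ∧ compatAll O (PosSet hkin O ∅ (nextL hkin s.2.2) l) (l, s.2.1.intent)
      then Act.go else Act.noop
  | _ => Act.noop

/-- The information-exchange protocol of `γ_intent`: exactly the agents at the front of a
lane broadcast `(lane_i, intent_i)`; the memory is the set of moves received in the
current round; sensor readings are `⟨front_i, lane_i, intent_i, time_i⟩`. -/
def Eintent (kin kout : ℕ) : IEP kin kout (Set (Move kin kout)) ℕ (Move kin kout) where
  initMem _ := ∅
  extra e _ := e.time
  msg _ _ _ o :=
    if o.1.front then
      match o.1.lane with
      | LaneStatus.inLane l => some (l, o.1.intent)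
      | _ => none
    else none
  upd _ _ _ B := B

/-- The context `γ_intent(F)`. -/
def gammaIntent (kin kout : ℕ) (F : Set (Adversary kin kout)) :
    Ctx kin kout (Set (Move kin kout)) ℕ (Move kin kout) :=
  ⟨Eintent kin kout, F⟩

/-- The protocol `P^intent`: go iff at the front and own move compatible with `Pos_i`
computed from the received moves. -/
def Pintent (hkin : 0 < kin) (O : Move kin kout → Move kin kout → Prop) :
    Prot kin kout (Set (Move kin kout)) ℕ := fun _ s =>
  match s.2.1.lane with
  | LaneStatus.inLane l =>
      if s.2.1.front ∧
          compatAll O (PosSet hkin O s.1 (nextL hkin s.2.2) l) (l, s.2.1.intent)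
      then Act.go else Act.noop
  | _ => Act.noop

end Inter

/-!
Validity is immediate, and an agent waiting at the front of lane `l` goes at the latest when
`next = l`, where `Pos_i = ∅`. Since reception never fails, all front agents receive the same set
`M` of moves in a round and build their sets `Pos` from the same `M` and the same `next`; of two
agents going together, the one whose lane comes later in the cyclic order from `next` has
admitted the other's move into its `Pos` and checked compatibility with it.

For lexicographic optimality, let `P'` be an intersection protocol dominating `P^intent`, and take
corresponding runs up to the first round where they differ. There some agent `i` goes under `P'`
but waits under `P^intent`, because a move `mv ∈ Pos_i` conflicts with its own. The local state of
`i` consists only of `M`, its own move and the time, so it recurs against the adversary that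
puts exactly `M`, the move of `i` and `mv` at the fronts at that time and lets exactly the
senders of `M` transmit. In that run `P^intent` sends the agent of `mv`, so by domination `P'`
sends it together with `i`, which violates Safety.
-/

namespace Inter

lemma injOn_fst_insert {α β : Type*} {A : Set (α × β)} (hA : A.InjOn Prod.fst) {a : α × β}
    (h : ∀ b, (a.1, b) ∈ A → b = a.2) : (insert a A).InjOn Prod.fst := by
  have key {b : α × β} (hb : b ∈ A) (hab : a.1 = b.1) : a = b :=
    Prod.ext hab (h b.2 (hab ▸ hb)).symm
  rintro x (rfl | hx) y (rfl | hy) hxy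
  · rfl
  · exact key hy hxy
  · exact (key hx hxy.symm).symm
  · exact hA hx hy hxy

section Cyclic

variable {kin : ℕ}

lemma distC_eq_val_sub (a b : Fin kin) : distC a b = ((b - a : Fin kin) : ℕ) := by
  rw [Fin.val_sub, distC]
  congr 1
  omega

lemma distC_self (a : Fin kin) : distC a a = 0 := by
  rw [distC, Nat.add_sub_cancel_left, Nat.mod_self]

lemma distC_lt (a b : Fin kin) : distC a b < kin :=
  distC_eq_val_sub a b ▸ (b - a).isLt

lemma val_add_distC (a b : Fin kin) : (a.val + distC a b) % kin = b.val := by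
  have : NeZero kin := ⟨a.pos.ne'⟩
  rw [distC_eq_val_sub, ← Fin.val_add, add_sub_cancel]

lemma distC_of_val_eq (a : Fin kin) {b : Fin kin} {t : ℕ} (ht : t < kin)
    (hb : b.val = (a.val + t) % kin) : distC a b = t := by
  have : NeZero kin := ⟨a.pos.ne'⟩
  have hb' : b = a + ⟨t, ht⟩ := Fin.ext (by rw [hb, Fin.val_add])
  rw [distC_eq_val_sub, hb', add_sub_cancel_left]

lemma distC_injective (a : Fin kin) : Function.Injective (distC a) := by
  have : NeZero kin := ⟨a.pos.ne'⟩
  intro b c h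
  rw [distC_eq_val_sub, distC_eq_val_sub] at h
  exact sub_left_injective (Fin.ext h)

end Cyclic

section PosConstruction

variable {kin kout : ℕ} (hkin : 0 < kin) (O : Move kin kout → Move kin kout → Prop)
  (M : Set (Move kin kout)) (nxt : Fin kin)

/-- The condition for the construction of `Pos` to admit `mv` at the stage of its lane. -/
def AgreesWith (M : Set (Move kin kout)) (mv : Move kin kout) : Prop :=
  mv ∈ M ∨ ∀ w, (mv.1, w) ∉ M

lemma posStage_mono : Monotone (posStage hkin O M nxt) := by
  refine monotone_nat_of_le_succ fun t mv h => ?_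
  rw [posStage]
  split <;> exact Or.inl h

lemma lane_posStage {t : ℕ} (ht : t < kin) :
    distC nxt (⟨(nxt.val + t) % kin, Nat.mod_lt _ hkin⟩ : Fin kin) = t :=
  distC_of_val_eq nxt ht rfl

lemma mem_posStage_distC {t : ℕ} (ht : t ≤ kin) {mv : Move kin kout}
    (h : mv ∈ posStage hkin O M nxt t) :
    distC nxt mv.1 < t ∧ mv ∈ posStage hkin O M nxt (distC nxt mv.1 + 1) := by
  induction t with
  | zero => exact absurd h (Set.notMem_empty _)
  | succ t ih =>
    have hlane {mv : Move kin kout} (hmv : mv.1 = ⟨(nxt.val + t) % kin, Nat.mod_lt _ hkin⟩) :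
        distC nxt mv.1 = t := hmv ▸ lane_posStage hkin nxt (by omega)
    rw [posStage] at h
    split at h <;> rcases h with h | h
    · exact (ih (by omega) h).imp (by omega) id
    · rw [hlane h.1]
      exact ⟨by omega, by rw [posStage, if_pos ‹_›]; exact Or.inr h⟩
    · exact (ih (by omega) h).imp (by omega) id
    · rw [hlane h.1]
      exact ⟨by omega, by rw [posStage, if_neg ‹_›]; exact Or.inr h⟩

lemma mem_posStage_succ_distC_iff {mv : Move kin kout} :
    mv ∈ posStage hkin O M nxt (distC nxt mv.1 + 1) ↔
      compatAll O (posStage hkin O M nxt (distC nxt mv.1)) mv ∧ AgreesWith M mv := by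
  have hlane : (⟨(nxt.val + distC nxt mv.1) % kin, Nat.mod_lt _ hkin⟩ : Fin kin) = mv.1 :=
    Fin.ext (val_add_distC nxt mv.1)
  have hnot : mv ∉ posStage hkin O M nxt (distC nxt mv.1) := fun h =>
    lt_irrefl _ (mem_posStage_distC hkin O M nxt (distC_lt nxt mv.1).le h).1
  rw [posStage, hlane]
  split
  case isTrue hM =>
    simp only [Set.mem_union, hnot, false_or, Set.mem_ofPred_eq, true_and, AgreesWith]
    exact ⟨fun h => ⟨h.2, Or.inl h.1⟩,
      fun h => ⟨h.2.resolve_right fun hno => hM.elim fun w hw => hno w hw, h.1⟩⟩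
  case isFalse hM =>
    simp only [Set.mem_union, hnot, false_or, Set.mem_ofPred_eq, true_and, AgreesWith]
    exact ⟨fun h => ⟨h, Or.inr fun w hw => hM ⟨w, hw⟩⟩, fun h => h.1⟩

end PosConstruction

section Step

variable {kin kout : ℕ} {Mem Extra Msg : Type*} {E : IEP kin kout Mem Extra Msg}
  {P : Prot kin kout Mem Extra} {g : GState kin kout Mem Extra}

structure WellFormed (e : EnvState kin kout) : Prop where
  nodup : ∀ l, (e.queue l).Nodup
  lane_unique : ∀ i l l', i ∈ e.queue l → i ∈ e.queue l' → l = l'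
  arrived : ∀ i l, i ∈ e.queue l → (e.adv.arrive i).1 ≤ e.time

def dequeue (P : Prot kin kout Mem Extra) (g : GState kin kout Mem Extra) (l : Fin kin) :
    List ℕ :=
  match (g.1.queue l).head? with
  | some i => if P i (g.2 i) = Act.go then (g.1.queue l).tail else g.1.queue l
  | none => g.1.queue l

lemma step_fst :
    (step E P g).1 = ⟨g.1.adv, g.1.time + 1,
      fun l => if h : ∃ i l', g.1.adv.arrive i = (g.1.time + 1, l, l') then
        dequeue P g l ++ [h.choose] else dequeue P g l,
      g.1.done ∪ {i | isFront g.1 i ∧ P i (g.2 i) = Act.go}⟩ := rfl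

lemma step_adv : (step E P g).1.adv = g.1.adv := rfl

lemma step_time : (step E P g).1.time = g.1.time + 1 := rfl

lemma step_queue (l : Fin kin) :
    (step E P g).1.queue l =
      if h : ∃ i l', g.1.adv.arrive i = (g.1.time + 1, l, l') then dequeue P g l ++ [h.choose]
      else dequeue P g l := rfl

lemma step_memory (i : ℕ) :
    ((step E P g).2 i).1 = E.upd i (g.2 i) (P i (g.2 i))
      (if g.1.adv.Fr g.1.time i = true ∧ (posAt (step E P g).1 i).isSome = true then
        {mv | ∃ j pj pi, E.msg j (g.2 j) (P j (g.2 j))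
            (minimalReading (step E P g).1 j, E.extra (step E P g).1 j) = some mv ∧
          g.1.adv.Ft g.1.time j = true ∧ posAt (step E P g).1 j = some pj ∧
          posAt (step E P g).1 i = some pi ∧ (pj, pi) ∈ g.1.adv.T}
      else ∅) := rfl

lemma dequeue_sublist (l : Fin kin) : (dequeue P g l).Sublist (g.1.queue l) := by
  unfold dequeue
  split
  · split
    · exact List.tail_sublist _
    · exact List.Sublist.refl _
  · exact List.Sublist.refl _

lemma dequeue_of_go {l : Fin kin} {i : ℕ} (h : (g.1.queue l).head? = some i)
    (hgo : P i (g.2 i) = Act.go) : dequeue P g l = (g.1.queue l).tail := by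
  rw [dequeue, h]
  exact if_pos hgo

lemma dequeue_of_not_go {l : Fin kin} {i : ℕ} (h : (g.1.queue l).head? = some i)
    (hgo : P i (g.2 i) ≠ Act.go) : dequeue P g l = g.1.queue l := by
  rw [dequeue, h]
  exact if_neg hgo

lemma mem_step_queue {l : Fin kin} {x : ℕ} (hx : x ∈ (step E P g).1.queue l) :
    x ∈ dequeue P g l ∨ ∃ w, g.1.adv.arrive x = (g.1.time + 1, l, w) := by
  rw [step_queue] at hx
  split at hx
  case isTrue h =>
    rcases List.mem_append.mp hx with hx | hx
    · exact Or.inl hx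
    · rw [List.mem_singleton.mp hx]
      exact Or.inr h.choose_spec
  case isFalse => exact Or.inl hx

lemma mem_step_queue' {l : Fin kin} {x : ℕ} (hx : x ∈ (step E P g).1.queue l) :
    x ∈ g.1.queue l ∨ ∃ w, g.1.adv.arrive x = (g.1.time + 1, l, w) :=
  (mem_step_queue hx).imp_left fun h => (dequeue_sublist l).subset h

lemma wellFormed_step (hwf : WellFormed g.1) : WellFormed (step E P g).1 where
  nodup l := by
    rw [step_queue]
    split
    case isTrue h =>
      refine ((hwf.nodup l).sublist (dequeue_sublist l)).append (List.nodup_singleton _) ?_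
      intro x hx hx'
      obtain ⟨w, hw⟩ := h.choose_spec
      have := hwf.arrived x l ((dequeue_sublist l).subset hx)
      rw [List.mem_singleton.mp hx', hw] at this
      omega
    case isFalse => exact (hwf.nodup l).sublist (dequeue_sublist l)
  lane_unique i l l' h h' := by
    rcases mem_step_queue' h with h | ⟨w, hw⟩ <;>
      rcases mem_step_queue' h' with h' | ⟨w', hw'⟩
    · exact hwf.lane_unique i l l' h h'
    · have := hwf.arrived i l h
      rw [hw'] at this
      omega
    · have := hwf.arrived i l' h'
      rw [hw] at this
      omega
    · rw [hw] at hw'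
      exact (Prod.ext_iff.mp (Prod.ext_iff.mp hw').2).1
  arrived i l h := by
    rw [step_adv, step_time]
    rcases mem_step_queue' h with h | ⟨w, hw⟩
    · exact (hwf.arrived i l h).trans (Nat.le_succ _)
    · rw [hw]

lemma head?_step_queue_of_not_go {l : Fin kin} {i : ℕ} (h : (g.1.queue l).head? = some i)
    (hgo : P i (g.2 i) ≠ Act.go) : ((step E P g).1.queue l).head? = some i := by
  rw [step_queue, dequeue_of_not_go h hgo]
  split <;> simp [h]

lemma WellFormed.not_mem_step_queue_of_go (hwf : WellFormed g.1) {l : Fin kin} {i : ℕ}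
    (h : (g.1.queue l).head? = some i) (hgo : P i (g.2 i) = Act.go) (l' : Fin kin) :
    i ∉ (step E P g).1.queue l' := by
  obtain ⟨t, ht⟩ := List.head?_eq_some_iff.mp h
  have hi : i ∈ g.1.queue l := List.mem_of_mem_head? h
  have hit : i ∉ t := (List.nodup_cons.mp (ht ▸ hwf.nodup l)).1
  intro hmem
  rcases mem_step_queue hmem with hmem | ⟨w, hw⟩
  · have hl : l' = l := hwf.lane_unique i l' l ((dequeue_sublist l').subset hmem) hi
    subst hl
    rw [dequeue_of_go h hgo, ht] at hmem
    exact hit hmem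
  · have := hwf.arrived i l hi
    rw [hw] at this
    omega

end Step

section Front

variable {kin kout : ℕ} {e : EnvState kin kout} {i : ℕ} {l : Fin kin}

lemma WellFormed.posAt_of_head (hwf : WellFormed e) (h : (e.queue l).head? = some i) :
    posAt e i = some (l, 0) := by
  have hi : i ∈ e.queue l := List.mem_of_mem_head? h
  have hex : ∃ l, i ∈ e.queue l := ⟨l, hi⟩
  obtain ⟨t, ht⟩ := List.head?_eq_some_iff.mp h
  rw [posAt, dif_pos hex, hwf.lane_unique i _ l hex.choose_spec hi, ht, List.idxOf_cons_self]

lemma WellFormed.moveAt_of_head (hwf : WellFormed e) (h : (e.queue l).head? = some i) :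
    moveAt e i = some (l, intentOf e i) := by
  rw [moveAt, hwf.posAt_of_head h]
  rfl

lemma WellFormed.minimalReading_of_head (hwf : WellFormed e) (h : (e.queue l).head? = some i) :
    minimalReading e i = ⟨True, .inLane l, intentOf e i⟩ := by
  have hi : i ∈ e.queue l := List.mem_of_mem_head? h
  have hex : ∃ l, i ∈ e.queue l := ⟨l, hi⟩
  simp only [minimalReading, dif_pos hex, hwf.lane_unique i _ l hex.choose_spec hi]
  congr
  exact eq_true ⟨l, h⟩

end Front

section Runs

variable {kin kout : ℕ} {Mem Extra Msg : Type*} {C : Ctx kin kout Mem Extra Msg}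
  {P : Prot kin kout Mem Extra} {r : Run kin kout Mem Extra}

lemma Runs.adv_eq (hr : r ∈ Runs C P) (m : ℕ) : (r m).1.adv = (r 0).1.adv := by
  induction m with
  | zero => rfl
  | succ m ih => rw [hr.2 m, step_adv, ih]

lemma Runs.time_eq (hr : r ∈ Runs C P) (m : ℕ) : (r m).1.time = m := by
  induction m with
  | zero => exact hr.1.2.1
  | succ m ih => rw [hr.2 m, step_time, ih]

lemma Runs.wellFormed (hr : r ∈ Runs C P) (m : ℕ) : WellFormed (r m).1 := by
  induction m with
  | zero =>
    have hq := hr.1.2.2.1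
    exact ⟨fun l => by simp [hq l], fun i l _ h => by simp [hq l] at h,
      fun i l h => by simp [hq l] at h⟩
  | succ m ih => rw [hr.2 m]; exact wellFormed_step ih

lemma Runs.reading_eq (hr : r ∈ Runs C P) (m i : ℕ) :
    ((r m).2 i).2 = (minimalReading (r m).1 i, C.iep.extra (r m).1 i) := by
  cases m with
  | zero => rw [hr.1.2.2.2.2 i]
  | succ m => rw [hr.2 m]; rfl

lemma Runs.not_frontAt_zero (hr : r ∈ Runs C P) (i : ℕ) : ¬ frontAt r 0 i := by
  rintro ⟨l, hl⟩
  simp [hr.1.2.2.1 l] at hl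

lemma Runs.GOs_zero (hr : r ∈ Runs C P) : GOs r 0 = ∅ :=
  Set.eq_empty_of_forall_notMem fun i hi => Runs.not_frontAt_zero hr i hi.1

lemma Runs.goingAt_iff (hr : r ∈ Runs C P) {m i : ℕ} {l : Fin kin}
    (hl : ((r m).1.queue l).head? = some i) : goingAt r m i ↔ P i ((r m).2 i) = Act.go := by
  refine ⟨fun hgo => by_contra fun hngo => hgo.2 ⟨l, ?_⟩, fun hgo => ⟨⟨l, hl⟩, ?_⟩⟩
  · rw [hr.2 m]
    exact head?_step_queue_of_not_go hl hngo
  · rintro ⟨l', hl'⟩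
    rw [hr.2 m] at hl'
    exact (Runs.wellFormed hr m).not_mem_step_queue_of_go hl hgo l' (List.mem_of_mem_head? hl')

def runOf (E : IEP kin kout Mem Extra Msg) (P : Prot kin kout Mem Extra)
    (α : Adversary kin kout) : Run kin kout Mem Extra
  | 0 =>
    let e : EnvState kin kout := ⟨α, 0, fun _ => [], ∅⟩
    (e, fun i => (E.initMem i, minimalReading e i, E.extra e i))
  | m + 1 => step E P (runOf E P α m)

lemma runOf_mem {α : Adversary kin kout} (hα : α ∈ C.adv) : runOf C.iep P α ∈ Runs C P :=
  ⟨⟨hα, rfl, fun _ => rfl, rfl, fun _ => rfl⟩, fun _ => rfl⟩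

end Runs

section IntentContext

variable {kin kout : ℕ} {F : Set (Adversary kin kout)}
  {Q : Prot kin kout (Set (Move kin kout)) ℕ} {r : Run kin kout (Set (Move kin kout)) ℕ}

lemma localState_eq (hr : r ∈ Runs (gammaIntent kin kout F) Q) (m i : ℕ) :
    (r m).2 i = (((r m).2 i).1, minimalReading (r m).1 i, m) :=
  Prod.ext rfl ((Runs.reading_eq hr m i).trans (congrArg _ (Runs.time_eq hr m)))

def deliveredMoves (e : EnvState kin kout) (k : ℕ) : Set (Move kin kout) :=
  {mv | ∃ j l, (e.queue l).head? = some j ∧ e.adv.Ft k j = true ∧ mv = (l, intentOf e j)}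

lemma Eintent_msg_eq_some {e : EnvState kin kout} (hwf : WellFormed e) {j : ℕ}
    {s : LState kin kout (Set (Move kin kout)) ℕ} {a : Act} {t : ℕ} {mv : Move kin kout} :
    (Eintent kin kout).msg j s a (minimalReading e j, t) = some mv ↔
      ∃ l, (e.queue l).head? = some j ∧ mv = (l, intentOf e j) := by
  by_cases hj : isFront e j
  · obtain ⟨l, hl⟩ := hj
    simp only [Eintent, hwf.minimalReading_of_head hl, if_true, Option.some.injEq]
    refine ⟨fun h => ⟨l, hl, h.symm⟩, ?_⟩
    rintro ⟨l', hl', rfl⟩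
    rw [hwf.lane_unique j l l' (List.mem_of_mem_head? hl) (List.mem_of_mem_head? hl')]
  · simp only [Eintent, minimalReading, if_neg hj, reduceCtorEq, false_iff, not_exists,
      not_and]
    exact fun l hl => absurd ⟨l, hl⟩ hj

lemma memory_eq_deliveredMoves (hr : r ∈ Runs (gammaIntent kin kout F) Q)
    (hFr : ∀ k x, (r 0).1.adv.Fr k x = true) {m i : ℕ} {l : Fin kin}
    (hl : ((r (m + 1)).1.queue l).head? = some i) :
    ((r (m + 1)).2 i).1 = deliveredMoves (r (m + 1)).1 m := by
  have hwf := Runs.wellFormed hr (m + 1)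
  have hadv := Runs.adv_eq hr m
  have htime := Runs.time_eq hr m
  rw [hr.2 m] at hl hwf ⊢
  rw [step_memory, if_pos ⟨hadv ▸ hFr _ _, by rw [hwf.posAt_of_head hl]; rfl⟩]
  ext mv
  constructor
  · rintro ⟨j, pj, pi, hmsg, hFt, -⟩
    obtain ⟨lj, hlj, rfl⟩ := (Eintent_msg_eq_some hwf).mp hmsg
    exact ⟨j, lj, hlj, by rwa [htime] at hFt, rfl⟩
  · rintro ⟨j, lj, hlj, hFt, rfl⟩
    exact ⟨j, _, _, (Eintent_msg_eq_some hwf).mpr ⟨lj, hlj, rfl⟩, by rwa [htime],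
      hwf.posAt_of_head hlj, hwf.posAt_of_head hl, (r m).1.adv.T_front lj l⟩

lemma localState_of_head (hr : r ∈ Runs (gammaIntent kin kout F) Q)
    (hFr : ∀ k x, (r 0).1.adv.Fr k x = true) {m i : ℕ} {l : Fin kin}
    (hl : ((r (m + 1)).1.queue l).head? = some i) :
    (r (m + 1)).2 i = (deliveredMoves (r (m + 1)).1 m,
      ⟨True, .inLane l, intentOf (r (m + 1)).1 i⟩, m + 1) := by
  rw [localState_eq hr, memory_eq_deliveredMoves hr hFr hl,
    (Runs.wellFormed hr _).minimalReading_of_head hl]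

end IntentContext

section Delivered

variable {kin kout : ℕ} {e : EnvState kin kout} {k i : ℕ} {l : Fin kin}

lemma eq_intentOf_of_mem_deliveredMoves (h : (e.queue l).head? = some i) {w : Fin kout}
    (hw : (l, w) ∈ deliveredMoves e k) : w = intentOf e i := by
  obtain ⟨j, l', hj, -, heq⟩ := hw
  obtain ⟨rfl, rfl⟩ := Prod.mk.inj heq
  rw [Option.some_injective _ (hj.symm.trans h)]

lemma injOn_fst_deliveredMoves : (deliveredMoves e k).InjOn Prod.fst := by
  rintro ⟨l, w⟩ hw ⟨l', w'⟩ hw' (rfl : l = l')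
  obtain ⟨j, l'', hj, -, heq⟩ := id hw
  obtain ⟨rfl, -⟩ := Prod.mk.inj heq
  rw [eq_intentOf_of_mem_deliveredMoves hj hw, eq_intentOf_of_mem_deliveredMoves hj hw']

lemma agreesWith_deliveredMoves (h : (e.queue l).head? = some i) :
    AgreesWith (deliveredMoves e k) (l, intentOf e i) := by
  by_cases hFt : e.adv.Ft k i = true
  · exact Or.inl ⟨i, l, h, hFt, rfl⟩
  · refine Or.inr fun w ⟨j, l', hj, hFt', heq⟩ => hFt ?_
    obtain ⟨rfl, -⟩ := Prod.mk.inj heq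
    rwa [Option.some_injective _ (hj.symm.trans h)] at hFt'

end Delivered

section PintentRuns

variable {kin kout : ℕ} (hkin : 0 < kin) (O : Move kin kout → Move kin kout → Prop)
  {F : Set (Adversary kin kout)} {r : Run kin kout (Set (Move kin kout)) ℕ}

lemma Pintent_eq_go_iff (i : ℕ) (M : Set (Move kin kout)) (l : Fin kin) (w : Fin kout)
    (t : ℕ) : Pintent hkin O i (M, ⟨True, .inLane l, w⟩, t) = Act.go ↔
      compatAll O (PosSet hkin O M (nextL hkin t) l) (l, w) := by
  simp only [Pintent, true_and]
  split_ifs with h <;> simp [h]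

lemma Pintent_goingAt_iff (hr : r ∈ Runs (gammaIntent kin kout F) (Pintent hkin O))
    (hFr : ∀ k x, (r 0).1.adv.Fr k x = true) {m i : ℕ} {l : Fin kin}
    (hl : ((r (m + 1)).1.queue l).head? = some i) :
    goingAt r (m + 1) i ↔ compatAll O
      (PosSet hkin O (deliveredMoves (r (m + 1)).1 m) (nextL hkin (m + 1)) l)
      (l, intentOf (r (m + 1)).1 i) := by
  rw [Runs.goingAt_iff hr hl, localState_of_head hr hFr hl, Pintent_eq_go_iff]

lemma Pintent_compat_of_goingAt (hr : r ∈ Runs (gammaIntent kin kout F) (Pintent hkin O))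
    (hFr : ∀ k x, (r 0).1.adv.Fr k x = true) {m i j : ℕ} {li lj : Fin kin}
    (hli : ((r (m + 1)).1.queue li).head? = some i)
    (hlj : ((r (m + 1)).1.queue lj).head? = some j)
    (hgi : goingAt r (m + 1) i) (hgj : goingAt r (m + 1) j)
    (hlt : distC (nextL hkin (m + 1)) lj < distC (nextL hkin (m + 1)) li) :
    O (li, intentOf (r (m + 1)).1 i) (lj, intentOf (r (m + 1)).1 j) := by
  have hj : (lj, intentOf (r (m + 1)).1 j) ∈ posStage hkin O (deliveredMoves (r (m + 1)).1 m)
      (nextL hkin (m + 1)) (distC (nextL hkin (m + 1)) lj + 1) :=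
    (mem_posStage_succ_distC_iff hkin O _ _ (mv := (lj, _))).mpr
      ⟨(Pintent_goingAt_iff hkin O hr hFr hlj).mp hgj, agreesWith_deliveredMoves hlj⟩
  exact (Pintent_goingAt_iff hkin O hr hFr hli).mp hgi _ (posStage_mono hkin O _ _ hlt hj)

lemma validity_Pintent : ValidityP (gammaIntent kin kout F) (Pintent hkin O) :=
  fun _ _ _ _ hgo => hgo.1

lemma safety_Pintent (hO : ∀ a b, O a b → O b a)
    (hFr : ∀ α ∈ F, ∀ k i, α.Fr k i = true) :
    SafetyP O (gammaIntent kin kout F) (Pintent hkin O) := by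
  intro r hr m i j hij hgi hgj mi mj hmi hmj
  cases m with
  | zero => exact absurd hgi.1 (Runs.not_frontAt_zero hr i)
  | succ m =>
    obtain ⟨li, hli⟩ := hgi.1
    obtain ⟨lj, hlj⟩ := hgj.1
    have hwf := Runs.wellFormed hr (m + 1)
    rw [hwf.moveAt_of_head hli, Option.some_inj] at hmi
    rw [hwf.moveAt_of_head hlj, Option.some_inj] at hmj
    subst hmi hmj
    have hFr' := hFr _ hr.1.1
    have hne : distC (nextL hkin (m + 1)) lj ≠ distC (nextL hkin (m + 1)) li := by
      intro h
      rw [distC_injective _ h] at hlj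
      exact hij (Option.some_injective _ (hli.symm.trans hlj))
    rcases lt_or_gt_of_ne hne with h | h
    · exact Pintent_compat_of_goingAt hkin O hr hFr' hli hlj hgi hgj h
    · exact hO _ _ (Pintent_compat_of_goingAt hkin O hr hFr' hlj hli hgj hgi h)

lemma liveness_Pintent : LivenessP (gammaIntent kin kout F) (Pintent hkin O) := by
  rintro r hr m i ⟨l, hl⟩
  by_contra! hno
  have hstay (t : ℕ) : ((r (m + t)).1.queue l).head? = some i := by
    induction t with
    | zero => exact hl
    | succ t ih =>
      rw [← Nat.add_assoc, hr.2 (m + t)]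
      exact head?_step_queue_of_not_go ih fun hgo =>
        hno (m + t) (by omega) ((Runs.goingAt_iff hr ih).mpr hgo)
  set t := distC (nextL hkin m) l
  have hnext : nextL hkin (m + t) = l :=
    Fin.ext ((Nat.mod_add_mod m kin t).symm.trans (val_add_distC (nextL hkin m) l))
  apply hno (m + t) (by omega)
  rw [Runs.goingAt_iff hr (hstay t), localState_eq hr,
    (Runs.wellFormed hr _).minimalReading_of_head (hstay t), Pintent_eq_go_iff, hnext,
    PosSet, distC_self]
  exact fun _ h => h.elim

end PintentRuns

section Determinism

variable {kin kout : ℕ} {F : Set (Adversary kin kout)}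
  {Q Q' : Prot kin kout (Set (Move kin kout)) ℕ}

/-- In `γ_intent` messages and memory updates do not depend on the action taken, so a round is
determined by the decisions of the front agents. -/
lemma step_congr_of_head {g : GState kin kout (Set (Move kin kout)) ℕ}
    (hact : ∀ l i, (g.1.queue l).head? = some i →
      (Q i (g.2 i) = Act.go ↔ Q' i (g.2 i) = Act.go)) :
    step (Eintent kin kout) Q g = step (Eintent kin kout) Q' g := by
  have hdeq (l : Fin kin) : dequeue Q g l = dequeue Q' g l := by
    unfold dequeue
    split
    case h_1 i hi => simp only [hact l i hi]
    case h_2 => rfl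
  have hdone : {i | isFront g.1 i ∧ Q i (g.2 i) = Act.go} =
      {i | isFront g.1 i ∧ Q' i (g.2 i) = Act.go} :=
    Set.ext fun i => ⟨fun ⟨⟨l, hl⟩, h⟩ => ⟨⟨l, hl⟩, (hact l i hl).mp h⟩,
      fun ⟨⟨l, hl⟩, h⟩ => ⟨⟨l, hl⟩, (hact l i hl).mpr h⟩⟩
  have henv : (step (Eintent kin kout) Q g).1 = (step (Eintent kin kout) Q' g).1 := by
    simp only [step_fst, hdeq, hdone]
  refine Prod.ext henv (funext fun i => Prod.ext ?_ ?_)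
  · rw [step_memory, step_memory, henv]
    rfl
  · exact congrArg (fun e => (minimalReading e i, e.time)) henv

lemma Runs.eq_of_GOs_eq {r r' : Run kin kout (Set (Move kin kout)) ℕ}
    (hr : r ∈ Runs (gammaIntent kin kout F) Q) (hr' : r' ∈ Runs (gammaIntent kin kout F) Q')
    (h0 : r 0 = r' 0) {m : ℕ} (hGO : ∀ k < m, GOs r k = GOs r' k) : r m = r' m := by
  induction m with
  | zero => exact h0
  | succ m ih =>
    have hm := ih fun k hk => hGO k (by omega)
    rw [hr.2 m, hr'.2 m, ← hm]
    refine step_congr_of_head fun l i hl => ?_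
    rw [← Runs.goingAt_iff hr hl, hm, ← Runs.goingAt_iff hr' (hm ▸ hl)]
    exact Set.ext_iff.mp (hGO m (by omega)) i

end Determinism

section LexDomination

variable {kin kout : ℕ} {Mem Extra Msg : Type*} {C : Ctx kin kout Mem Extra Msg}
  {P P' : Prot kin kout Mem Extra}

lemma LexDominates.GOs_subset (h : LexDominates C P P') {r r' : Run kin kout Mem Extra}
    (hr : r ∈ Runs C P) (hr' : r' ∈ Runs C P') (h0 : r 0 = r' 0) {m : ℕ}
    (hGO : ∀ k < m, GOs r k = GOs r' k) : GOs r' m ⊆ GOs r m := by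
  rcases h r hr r' hr' h0 with hall | ⟨m', hbefore, hne, hsub⟩
  · exact (hall m).ge
  · rcases lt_trichotomy m' m with hlt | rfl | hgt
    · exact absurd (hGO m' hlt) hne
    · exact hsub.subset
    · exact (hbefore m hgt).ge

lemma StrictLexDominates.exists_ssubset (h : StrictLexDominates C P P') :
    ∃ r ∈ Runs C P, ∃ r' ∈ Runs C P', r 0 = r' 0 ∧
      ∃ m, (∀ k < m, GOs r k = GOs r' k) ∧ GOs r' m ⊂ GOs r m := by
  obtain ⟨hdom, hnot⟩ := h
  simp only [LexDominates, not_forall, not_or] at hnot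
  obtain ⟨r', hr', r, hr, h0, ⟨m', hne⟩, -⟩ := hnot
  rcases hdom r hr r' hr' h0.symm with hall | ⟨m, hbefore, -, hsub⟩
  · exact absurd (hall m').symm hne
  · exact ⟨r, hr, r', hr', h0.symm, m, hbefore, hsub⟩

end LexDomination

section FrontAdversary

variable {kin kout : ℕ} (A S : Set (Move kin kout)) (agent : Fin kin ↪ ℕ) (m0 : ℕ)
  (d : Move kin kout)

/-- Agents not placed by `A` arrive one per round after `m0`, which keeps the schedule
conflict-free without affecting the first `m0` rounds. -/
def frontArrive (x : ℕ) : ℕ × Move kin kout :=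
  if h : ∃ mv ∈ A, agent mv.1 = x then (m0, h.choose) else (m0 + 1 + x, d)

lemma frontArrive_conflictFree (x y : ℕ) (hxy : x ≠ y)
    (ht : (frontArrive A agent m0 d x).1 = (frontArrive A agent m0 d y).1) :
    (frontArrive A agent m0 d x).2.1 ≠ (frontArrive A agent m0 d y).2.1 := by
  unfold frontArrive at ht ⊢
  split_ifs at ht ⊢ with hx hy hy
  · intro hl
    exact hxy (hx.choose_spec.2.symm.trans (hl ▸ hy.choose_spec.2))
  all_goals simp only at ht; omega

/-- The adversary that places exactly the moves of `A` at the fronts of the lanes at time `m0`,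
with transmissions succeeding exactly for the agents whose moves are in `S`. -/
def frontAdversary : Adversary kin kout where
  arrive := frontArrive A agent m0 d
  conflictFree := frontArrive_conflictFree A agent m0 d
  T := Set.univ
  T_front _ _ := Set.mem_univ _
  Ft _ x := decide (∃ mv ∈ S, agent mv.1 = x)
  Fr _ _ := true

variable {A S agent m0 d}

lemma frontArrive_agent (hA : A.InjOn Prod.fst) {mv : Move kin kout} (hmv : mv ∈ A) :
    frontArrive A agent m0 d (agent mv.1) = (m0, mv) := by
  have h : ∃ mv' ∈ A, agent mv'.1 = agent mv.1 := ⟨mv, hmv, rfl⟩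
  rw [frontArrive, dif_pos h,
    hA h.choose_spec.1 hmv (agent.injective h.choose_spec.2)]

lemma eq_of_frontArrive_eq {x t : ℕ} {mv : Move kin kout}
    (h : frontArrive A agent m0 d x = (t, mv)) (ht : t ≤ m0) :
    t = m0 ∧ mv ∈ A ∧ x = agent mv.1 := by
  unfold frontArrive at h
  split_ifs at h with hx
  · obtain ⟨rfl, rfl⟩ := Prod.mk.inj h
    exact ⟨rfl, hx.choose_spec.1, hx.choose_spec.2.symm⟩
  · have := congrArg Prod.fst h
    simp only at this
    omega

variable {Mem Extra Msg : Type*} {C : Ctx kin kout Mem Extra Msg}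
  {P : Prot kin kout Mem Extra} {r : Run kin kout Mem Extra}

lemma queue_frontAdversary (hr : r ∈ Runs C P)
    (hα : (r 0).1.adv = frontAdversary A S agent m0 d) (hA : A.InjOn Prod.fst) (hm0 : 0 < m0)
    {k : ℕ} (hk : k ≤ m0) (l : Fin kin) :
    (r k).1.queue l = if k = m0 ∧ ∃ w, (l, w) ∈ A then [agent l] else [] := by
  induction k with
  | zero => rw [hr.1.2.2.1 l, if_neg fun h => hm0.ne h.1]
  | succ k ih =>
    have hnil : (r k).1.queue l = [] := by rw [ih (by omega), if_neg fun h => by omega]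
    have hdeq : dequeue P (r k) l = [] := by rw [dequeue, hnil]; rfl
    have harr {x : ℕ} {w : Fin kout} (hx : (r k).1.adv.arrive x = ((r k).1.time + 1, l, w)) :
        k + 1 = m0 ∧ (l, w) ∈ A ∧ x = agent l := by
      rw [Runs.adv_eq hr, hα, Runs.time_eq hr] at hx
      exact eq_of_frontArrive_eq hx hk
    rw [hr.2 k, step_queue, hdeq]
    split_ifs with hnew hm hm
    · obtain ⟨w, hw⟩ := hnew.choose_spec
      rw [(harr hw).2.2, List.nil_append]
    · obtain ⟨x, w, hx⟩ := hnew
      exact absurd ⟨(harr hx).1, w, (harr hx).2.1⟩ hm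
    · obtain ⟨rfl, w, hw⟩ := hm
      refine absurd ⟨agent l, w, ?_⟩ hnew
      rw [Runs.adv_eq hr, hα, Runs.time_eq hr]
      exact frontArrive_agent hA hw
    · rfl

lemma GOs_frontAdversary (hr : r ∈ Runs C P)
    (hα : (r 0).1.adv = frontAdversary A S agent m0 d) (hA : A.InjOn Prod.fst) (hm0 : 0 < m0)
    {k : ℕ} (hk : k < m0) : GOs r k = ∅ := by
  refine Set.eq_empty_of_forall_notMem fun i ⟨⟨l, hl⟩, _⟩ => ?_
  rw [queue_frontAdversary hr hα hA hm0 hk.le, if_neg fun h => by omega] at hl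
  cases hl

lemma head?_frontAdversary (hr : r ∈ Runs C P)
    (hα : (r 0).1.adv = frontAdversary A S agent m0 d) (hA : A.InjOn Prod.fst) (hm0 : 0 < m0)
    {mv : Move kin kout} (hmv : mv ∈ A) :
    ((r m0).1.queue mv.1).head? = some (agent mv.1) := by
  rw [queue_frontAdversary hr hα hA hm0 le_rfl, if_pos ⟨rfl, mv.2, hmv⟩]
  rfl

lemma intentOf_frontAdversary (hr : r ∈ Runs C P)
    (hα : (r 0).1.adv = frontAdversary A S agent m0 d) (hA : A.InjOn Prod.fst)
    {mv : Move kin kout} (hmv : mv ∈ A) (k : ℕ) :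
    intentOf (r k).1 (agent mv.1) = mv.2 := by
  rw [intentOf, Runs.adv_eq hr, hα]
  change (frontArrive A agent m0 d (agent mv.1)).2.2 = mv.2
  rw [frontArrive_agent hA hmv]

lemma deliveredMoves_frontAdversary (hr : r ∈ Runs C P)
    (hα : (r 0).1.adv = frontAdversary A S agent m0 d) (hA : A.InjOn Prod.fst) (hm0 : 0 < m0)
    (hSA : S ⊆ A) (k : ℕ) : deliveredMoves (r m0).1 k = S := by
  have hFt (j : ℕ) : (r m0).1.adv.Ft k j = true ↔ ∃ mv ∈ S, agent mv.1 = j := by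
    rw [Runs.adv_eq hr, hα]
    exact decide_eq_true_iff
  ext mv
  constructor
  · rintro ⟨j, l, hl, hj, rfl⟩
    obtain ⟨mv, hmv, rfl⟩ := (hFt j).mp hj
    obtain rfl : l = mv.1 := (Runs.wellFormed hr m0).lane_unique _ l mv.1
      (List.mem_of_mem_head? hl)
      (List.mem_of_mem_head? (head?_frontAdversary hr hα hA hm0 (hSA hmv)))
    rwa [intentOf_frontAdversary hr hα hA (hSA hmv)]
  · intro hmv
    refine ⟨agent mv.1, mv.1, head?_frontAdversary hr hα hA hm0 (hSA hmv),
      (hFt _).mpr ⟨mv, hmv, rfl⟩, ?_⟩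
    rw [intentOf_frontAdversary hr hα hA (hSA hmv)]

end FrontAdversary

section FrontAdversaryIntent

variable {kin kout : ℕ} {F : Set (Adversary kin kout)}
  {Q : Prot kin kout (Set (Move kin kout)) ℕ} {r : Run kin kout (Set (Move kin kout)) ℕ}
  {A S : Set (Move kin kout)} {agent : Fin kin ↪ ℕ}
  {n : ℕ} {d : Move kin kout}

lemma goingAt_frontAdversary_iff (hr : r ∈ Runs (gammaIntent kin kout F) Q)
    (hα : (r 0).1.adv = frontAdversary A S agent (n + 1) d) (hA : A.InjOn Prod.fst)
    (hSA : S ⊆ A) {mv : Move kin kout} (hmv : mv ∈ A) :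
    goingAt r (n + 1) (agent mv.1) ↔
      Q (agent mv.1) (S, ⟨True, .inLane mv.1, mv.2⟩, n + 1) = Act.go := by
  have hl := head?_frontAdversary hr hα hA n.succ_pos hmv
  rw [Runs.goingAt_iff hr hl, localState_of_head hr (fun _ _ => by rw [hα]; rfl) hl,
    deliveredMoves_frontAdversary hr hα hA n.succ_pos hSA,
    intentOf_frontAdversary hr hα hA hmv]

lemma moveAt_frontAdversary (hr : r ∈ Runs (gammaIntent kin kout F) Q)
    (hα : (r 0).1.adv = frontAdversary A S agent (n + 1) d) (hA : A.InjOn Prod.fst)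
    {mv : Move kin kout} (hmv : mv ∈ A) : moveAt (r (n + 1)).1 (agent mv.1) = some mv := by
  rw [(Runs.wellFormed hr _).moveAt_of_head (head?_frontAdversary hr hα hA n.succ_pos hmv),
    intentOf_frontAdversary hr hα hA hmv]

end FrontAdversaryIntent

section LexOptimality

variable {kin kout : ℕ} (hkin : 0 < kin) (O : Move kin kout → Move kin kout → Prop)
  {F : Set (Adversary kin kout)}

lemma not_lexDominates_Pintent_of_go
    (hF : ∀ α : Adversary kin kout, (∀ k x, α.Fr k x = true) →
      (∀ k k' x, α.Ft k x = α.Ft k' x) → α ∈ F)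
    {P' : Prot kin kout (Set (Move kin kout)) ℕ} (hsafe : SafetyP O (gammaIntent kin kout F) P')
    {M : Set (Move kin kout)} (hM : M.InjOn Prod.fst) {i n : ℕ} {li : Fin kin}
    {inti : Fin kout} (hli : ∀ w, (li, w) ∈ M → w = inti)
    (hgo : P' i (M, ⟨True, .inLane li, inti⟩, n + 1) = Act.go) {mv : Move kin kout}
    (hmv : mv ∈ PosSet hkin O M (nextL hkin (n + 1)) li) (hnO : ¬ O (li, inti) mv) :
    ¬ LexDominates (gammaIntent kin kout F) P' (Pintent hkin O) := by
  intro hdom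
  obtain ⟨hlt, hmv'⟩ := mem_posStage_distC hkin O M _ (distC_lt _ li).le hmv
  obtain ⟨hcompat, hagree⟩ := (mem_posStage_succ_distC_iff hkin O M _).mp hmv'
  have hne : li ≠ mv.1 := by rintro rfl; exact hlt.false
  have hAmv : (insert mv M).InjOn Prod.fst := injOn_fst_insert hM fun w hw =>
    hagree.elim (fun h => hM hw h rfl ▸ rfl) fun h => (h w hw).elim
  have hA : (insert (li, inti) (insert mv M)).InjOn Prod.fst := injOn_fst_insert hAmv
    fun w hw => hw.elim (fun h => absurd (congrArg Prod.fst h) hne) (hli w)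
  let agent : Fin kin ↪ ℕ := Fin.valEmbedding.trans (Equiv.swap (li : ℕ) i).toEmbedding
  have hagent : agent li = i := Equiv.swap_apply_left _ _
  let α := frontAdversary (insert (li, inti) (insert mv M)) M agent (n + 1) mv
  have hα : α ∈ F := hF α (fun _ _ => rfl) (fun _ _ _ => rfl)
  set rP := runOf (Eintent kin kout) (Pintent hkin O) α
  set rQ := runOf (Eintent kin kout) P' α
  have hrP : rP ∈ Runs (gammaIntent kin kout F) (Pintent hkin O) := runOf_mem hα
  have hrQ : rQ ∈ Runs (gammaIntent kin kout F) P' := runOf_mem hα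
  have hMA : M ⊆ insert (li, inti) (insert mv M) := fun _ h => .inr (.inr h)
  have hiA : (li, inti) ∈ insert (li, inti) (insert mv M) := .inl rfl
  have hmvA : mv ∈ insert (li, inti) (insert mv M) := .inr (.inl rfl)
  have hjP : goingAt rP (n + 1) (agent mv.1) := by
    rw [goingAt_frontAdversary_iff hrP rfl hA hMA hmvA, Pintent_eq_go_iff]
    exact hcompat
  have hiQ : goingAt rQ (n + 1) (agent li) := by
    rw [goingAt_frontAdversary_iff hrQ rfl hA hMA hiA, hagent]
    exact hgo
  have hjQ := hdom.GOs_subset hrQ hrP rfl (fun k hk => by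
    rw [GOs_frontAdversary hrQ rfl hA n.succ_pos hk,
      GOs_frontAdversary hrP rfl hA n.succ_pos hk]) hjP
  exact hnO (hsafe _ hrQ (n + 1) _ _ (agent.injective.ne hne) hiQ hjQ _ _
    (moveAt_frontAdversary hrQ rfl hA hiA) (moveAt_frontAdversary hrQ rfl hA hmvA))

lemma lexOptimal_Pintent (hFr : ∀ α ∈ F, ∀ k x, α.Fr k x = true)
    (hF : ∀ α : Adversary kin kout, (∀ k x, α.Fr k x = true) →
      (∀ k k' x, α.Ft k x = α.Ft k' x) → α ∈ F) :
    LexOptimal O (gammaIntent kin kout F) (Pintent hkin O) := by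
  rintro ⟨P', hP', hdom⟩
  obtain ⟨r', hr', r, hr, h0, m, hbefore, hsub⟩ := hdom.exists_ssubset
  obtain ⟨i, hi', hi⟩ := Set.exists_of_ssubset hsub
  obtain ⟨n, rfl⟩ : ∃ n, m = n + 1 :=
    Nat.exists_eq_succ_of_ne_zero fun h => by simp [h, Runs.GOs_zero hr'] at hi'
  obtain ⟨li, hli'⟩ := hi'.1
  have hrr : r' (n + 1) = r (n + 1) := Runs.eq_of_GOs_eq hr' hr h0 hbefore
  have hli : ((r (n + 1)).1.queue li).head? = some i := hrr ▸ hli'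
  have hgo : P' i (deliveredMoves (r (n + 1)).1 n,
      ⟨True, .inLane li, intentOf (r (n + 1)).1 i⟩, n + 1) = Act.go := by
    rw [← hrr, ← localState_of_head hr' (hFr _ hr'.1.1) hli']
    exact (Runs.goingAt_iff hr' hli').mp hi'
  have hnc := mt (Pintent_goingAt_iff hkin O hr (hFr _ hr.1.1) hli).mpr hi
  simp only [compatAll, not_forall] at hnc
  obtain ⟨mv, hmv, hnO⟩ := hnc
  exact not_lexDominates_Pintent_of_go hkin O hF hP'.2.1 injOn_fst_deliveredMoves
    (fun _ hw => eq_intentOf_of_mem_deliveredMoves hli hw) hgo hmv hnO hdom.1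

end LexOptimality

end Inter

open Inter

/-- `P^intent` is an intersection protocol (Validity, Safety, Liveness)
and is lexicographically optimal with respect to `γ_intent(F)` for each `F ∈ {CR, SO}`. -/
theorem Pintent_intersection_protocol_and_lex_optimal
    {kin kout : ℕ} (hkin : 0 < kin)
    (O : Move kin kout → Move kin kout → Prop)
    (hO : ∀ a b, O a b → O b a) :
    ∀ F ∈ ({CRadv kin kout, SOadv kin kout} : Set (Set (Adversary kin kout))),
      IsIntersectionProtocol O (gammaIntent kin kout F) (Pintent hkin O) ∧
      LexOptimal O (gammaIntent kin kout F) (Pintent hkin O) := by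
  intro F hF
  simp only [Set.mem_insert_iff, Set.mem_singleton_iff] at hF
  have hFr : ∀ α ∈ F, ∀ k x, α.Fr k x = true := by
    rcases hF with rfl | rfl
    exacts [fun α hα => hα.1, fun α hα => hα]
  have hmem : ∀ α : Adversary kin kout, (∀ k x, α.Fr k x = true) →
      (∀ k k' x, α.Ft k x = α.Ft k' x) → α ∈ F := by
    rcases hF with rfl | rfl
    exacts [fun _ hFr hFt => ⟨hFr, fun k x h k' _ => (hFt k' k x).trans h⟩,
      fun _ hFr _ => hFr]
  exact ⟨⟨validity_Pintent hkin O, safety_Pintent hkin O hO hFr, liveness_Pintent hkin O⟩,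
    lexOptimal_Pintent hkin O hFr hmem⟩
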